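/- arXiv:0712.1337 — 7 statements merged into one kernel-verified Lean document; each statement's English description precedes it below -/
import Mathlib

section
/- In a Conway semiring, the group identity for the cyclic group of order 2, namely (a₁ + a₂ a₁* a₂)* (1 + a₂ a₁*) = (a₁ + a₂)*, is equivalent to the identity (a²)* (1 + a) = a* holding for all a. More precisely: a Conway semiring satisfies the first identity for all a₁, a₂ if and only if it satisfies (a²)*(1+a) = a* for all a. -/
/-! Specialising `a₁ = 0` gives the one-variable identity, since `0* = 1` by the product-star
law. Conversely, the sum-star law rewrites `(a₁ + a₂ a₁* a₂)*` as `a₁* ((a₂ a₁*)²)*` and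
`(a₁ + a₂)*` as `a₁* (a₂ a₁*)*`, so the group identity is `a₁*` times the one-variable identity
at `a = a₂ a₁*`. -/

theorem star_zero_eq_one_of_star_mul {S : Type*} [Semiring S] (star : S → S)
    (hprod : ∀ a b : S, star (a * b) = 1 + a * star (b * a) * b) : star 0 = 1 := by
  simpa using hprod 0 0

/-- In a Conway semiring, the group identity for the cyclic group of order 2
holds for all `a₁, a₂` iff `(a²)*(1+a) = a*` holds for all `a`. -/
theorem stmt_5 {S : Type*} [Semiring S] (star : S → S)
    (hsum : ∀ a b : S, star (a + b) = star a * star (b * star a))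
    (hprod : ∀ a b : S, star (a * b) = 1 + a * star (b * a) * b) :
    (∀ a₁ a₂ : S,
        star (a₁ + a₂ * star a₁ * a₂) * (1 + a₂ * star a₁) = star (a₁ + a₂)) ↔
    (∀ a : S, star (a * a) * (1 + a) = star a) := by
  constructor
  · intro h a
    simpa [star_zero_eq_one_of_star_mul star hprod] using h 0 a
  · intro h a₁ a₂
    calc star (a₁ + a₂ * star a₁ * a₂) * (1 + a₂ * star a₁)
        = star a₁ * (star (a₂ * star a₁ * (a₂ * star a₁)) * (1 + a₂ * star a₁)) := by
          rw [hsum, mul_assoc, ← mul_assoc (a₂ * star a₁)]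
      _ = star a₁ * star (a₂ * star a₁) := by rw [h]
      _ = star (a₁ + a₂) := (hsum a₁ a₂).symm
end

section
/- The semiring ℕ∞ = ℕ ∪ {∞} (with n + ∞ = ∞ and m·∞ = ∞ for m ≠ 0, 0·∞ = 0) is atomistic. -/
/-!
If some `a i₀` is infinite then so is some `b j₀`. The matrix with `b` in row `i₀`, `a` in
column `j₀` off row `i₀`, and zeros elsewhere then has row sums `a` and column sums `b`, because
its `(i₀, j₀)` entry is infinite; its entries form a common refinement. If everything is finite,
cut `N = ∑ a i = ∑ b j` units into consecutive blocks of sizes `a i` and, separately, of sizes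
`b j`: the `N` units refine both.
-/

open Finset

def HasCommonRefinement {S : Type*} [AddCommMonoid S] {m n : ℕ} (a : Fin m → S)
    (b : Fin n → S) : Prop :=
  ∃ (k : ℕ) (c : Fin k → S) (I : Fin m → Finset (Fin k)) (J : Fin n → Finset (Fin k)),
    (∀ i i', i ≠ i' → Disjoint (I i) (I i')) ∧
    (Finset.univ.biUnion I = Finset.univ) ∧
    (∀ j j', j ≠ j' → Disjoint (J j) (J j')) ∧
    (Finset.univ.biUnion J = Finset.univ) ∧
    (∀ i, a i = ∑ p ∈ I i, c p) ∧
    (∀ j, b j = ∑ q ∈ J j, c q)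

section

variable {S : Type*} [AddCommMonoid S] {m n : ℕ} {a : Fin m → S} {b : Fin n → S}

/-- A partition of `Fin k` into blocks labelled by `Fin m` is the same as a map `Fin k → Fin m`
(its fibres), and `Fin k` may be replaced by any finite type. -/
theorem hasCommonRefinement_of_fibers {κ : Type*} [Fintype κ] (c : κ → S) (π : κ → Fin m)
    (ρ : κ → Fin n) (ha : ∀ i, a i = ∑ p with π p = i, c p)
    (hb : ∀ j, b j = ∑ q with ρ q = j, c q) : HasCommonRefinement a b := by
  let e := (Fintype.equivFin κ).symm
  have sum_fiber {l : ℕ} (σ : κ → Fin l) (i : Fin l) :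
      ∑ p with σ p = i, c p = ∑ p with σ (e p) = i, c (e p) := by
    simp only [sum_filter]
    exact (e.sum_comp fun x => if σ x = i then c x else 0).symm
  refine ⟨Fintype.card κ, c ∘ e, fun i => {p | π (e p) = i}, fun j => {q | ρ (e q) = j},
    ?_, ?_, ?_, ?_, fun i => (ha i).trans (sum_fiber π i), fun j => (hb j).trans (sum_fiber ρ j)⟩
  · exact fun i i' hne => disjoint_filter.2 fun p _ h h' => hne (h.symm.trans h')
  · exact eq_univ_of_forall fun p => mem_biUnion.2 ⟨π (e p), mem_univ _, by simp⟩
  · exact fun j j' hne => disjoint_filter.2 fun q _ h h' => hne (h.symm.trans h')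
  · exact eq_univ_of_forall fun q => mem_biUnion.2 ⟨ρ (e q), mem_univ _, by simp⟩

theorem hasCommonRefinement_of_matrix (M : Fin m → Fin n → S) (ha : ∀ i, a i = ∑ j, M i j)
    (hb : ∀ j, b j = ∑ i, M i j) : HasCommonRefinement a b := by
  refine hasCommonRefinement_of_fibers (fun p => M p.1 p.2) Prod.fst Prod.snd
    (fun i => ?_) (fun j => ?_)
  · simp [ha i, sum_filter, Fintype.sum_prod_type]
  · simp [hb j, sum_filter, Fintype.sum_prod_type]

theorem HasCommonRefinement.map {T : Type*} [AddCommMonoid T] (φ : S →+ T)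
    (h : HasCommonRefinement a b) : HasCommonRefinement (φ ∘ a) (φ ∘ b) := by
  obtain ⟨k, c, I, J, hI, hIu, hJ, hJu, ha, hb⟩ := h
  exact ⟨k, φ ∘ c, I, J, hI, hIu, hJ, hJu, fun i => by simp [ha i], fun j => by simp [hb j]⟩

end

theorem Nat.hasCommonRefinement {m n : ℕ} {a : Fin m → ℕ} {b : Fin n → ℕ}
    (h : ∑ i, a i = ∑ j, b j) : HasCommonRefinement a b := by
  let e : (Σ j, Fin (b j)) ≃ Σ i, Fin (a i) :=
    finSigmaFinEquiv.trans ((finCongr h.symm).trans finSigmaFinEquiv.symm)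
  refine hasCommonRefinement_of_fibers (fun _ => 1) Sigma.fst (fun p => (e.symm p).1)
    (fun i => ?_) (fun j => ?_)
  · rw [sum_filter, Fintype.sum_sigma]
    simp [apply_ite]
  · rw [sum_filter, ← e.sum_comp, Fintype.sum_sigma]
    simp

theorem WithTop.hasCommonRefinement_of_eq_top {α : Type*} [AddCommMonoid α] {m n : ℕ}
    {a : Fin m → WithTop α} {b : Fin n → WithTop α} (h : ∑ i, a i = ∑ j, b j) {i₀ : Fin m}
    (hi₀ : a i₀ = ⊤) : HasCommonRefinement a b := by
  have hsum : ∑ j, b j = ⊤ := h ▸ WithTop.sum_eq_top.2 ⟨i₀, mem_univ _, hi₀⟩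
  obtain ⟨j₀, -, hj₀⟩ := WithTop.sum_eq_top.1 hsum
  refine hasCommonRefinement_of_matrix
    (fun i j => if i = i₀ then b j else if j = j₀ then a i else 0) (fun i => ?_) (fun j => ?_)
  · by_cases hi : i = i₀
    · simp [hi, hi₀, hsum]
    · simp [hi]
  · by_cases hj : j = j₀
    · subst hj
      exact hj₀.trans (WithTop.sum_eq_top.2 ⟨i₀, mem_univ _, by simp [hj₀]⟩).symm
    · simp [hj]

/-- The semiring `ℕ∞ = ℕ ∪ {∞}` is atomistic. -/
theorem stmt_9 (m n : ℕ) (a : Fin m → ℕ∞) (b : Fin n → ℕ∞)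
    (h : ∑ i, a i = ∑ j, b j) :
    ∃ (k : ℕ) (c : Fin k → ℕ∞)
      (I : Fin m → Finset (Fin k)) (J : Fin n → Finset (Fin k)),
      (∀ i i', i ≠ i' → Disjoint (I i) (I i')) ∧
      (Finset.univ.biUnion I = Finset.univ) ∧
      (∀ j j', j ≠ j' → Disjoint (J j) (J j')) ∧
      (Finset.univ.biUnion J = Finset.univ) ∧
      (∀ i, a i = ∑ p ∈ I i, c p) ∧
      (∀ j, b j = ∑ q ∈ J j, c q) := by
  by_cases ha : ∃ i, a i = ⊤
  · obtain ⟨i₀, hi₀⟩ := ha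
    exact WithTop.hasCommonRefinement_of_eq_top h hi₀
  push Not at ha
  have hb : ∀ j, b j ≠ ⊤ := fun j hj =>
    WithTop.sum_ne_top.2 (fun i _ => ha i) (h ▸ WithTop.sum_eq_top.2 ⟨j, mem_univ _, hj⟩)
  lift a to Fin m → ℕ using ha
  lift b to Fin n → ℕ using hb
  have h' : ∑ i, a i = ∑ j, b j := by simpa only [← Nat.cast_sum, Nat.cast_inj] using h
  exact (Nat.hasCommonRefinement h').map (Nat.castAddMonoidHom ℕ∞)
end

section
/- In any Conway semiring, the identity (a+1)* = a* · a** holds; consequently, in a Conway semiring satisfying 1*·1* = 1*, 1*·a = a·1*, and 1*·(1*a)* = 1*·a*, one has a** = 1*·a* and (1+a)* = 1*·a* for all a. -/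
/-!
Both parts come from instantiating the two Conway identities at `1`: the product identity
at `b = 1` gives the fixed-point equation `a* = 1 + a a*`, and the sum identity at `b = 1`
gives `(a+1)* = a* a**`. Under the extra hypotheses the sum identity at `(1, a)` becomes
`(1+a)* = 1* a*`, so `a** = 1 + a* a** = 1 + 1* a*`; finally `1* = 1 + 1*` absorbs the `1`.
-/

section ConwayStar

variable {S : Type*} [Semiring S] {star : S → S}

theorem star_eq_one_add_mul_star (hprod : ∀ a b : S, star (a * b) = 1 + a * star (b * a) * b)
    (a : S) : star a = 1 + a * star a := by
  simpa using hprod a 1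

theorem star_add_one_eq_star_mul_star_star
    (hsum : ∀ a b : S, star (a + b) = star a * star (b * star a)) (a : S) :
    star (a + 1) = star a * star (star a) := by
  simpa using hsum a 1

theorem star_one_add_eq_star_one_mul_star
    (hsum : ∀ a b : S, star (a + b) = star a * star (b * star a))
    (hcomm : ∀ a : S, star 1 * a = a * star 1)
    (hdenest : ∀ a : S, star 1 * star (star 1 * a) = star 1 * star a) (a : S) :
    star (1 + a) = star 1 * star a := by
  rw [hsum, ← hcomm, hdenest]

theorem star_one_mul_one_add_eq (hone : star 1 = 1 + star 1) (b : S) :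
    star 1 * (1 + b) = 1 + star 1 * (1 + b) := by
  calc star 1 * (1 + b) = star 1 + star 1 * b := by rw [mul_add, mul_one]
    _ = 1 + star 1 * (1 + b) := by rw [mul_add, mul_one, ← add_assoc, ← hone]

end ConwayStar

/-- In any Conway semiring, `(a+1)* = a*·a**` holds; consequently, in a Conway
semiring satisfying `1*·1* = 1*`, `1*·a = a·1*`, and `1*·(1*a)* = 1*·a*`, one
has `a** = 1*·a*` and `(1+a)* = 1*·a*` for all `a`. -/
theorem stmt_11 {S : Type*} [Semiring S] (star : S → S)
    (hsum : ∀ a b : S, star (a + b) = star a * star (b * star a))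
    (hprod : ∀ a b : S, star (a * b) = 1 + a * star (b * a) * b) :
    (∀ a : S, star (a + 1) = star a * star (star a)) ∧
    ((star 1 * star 1 = star 1) →
      (∀ a : S, star 1 * a = a * star 1) →
      (∀ a : S, star 1 * star (star 1 * a) = star 1 * star a) →
      ∀ a : S, star (star a) = star 1 * star a ∧ star (1 + a) = star 1 * star a) := by
  have hfix := star_eq_one_add_mul_star hprod
  refine ⟨star_add_one_eq_star_mul_star_star hsum, fun _ hcomm hdenest a => ?_⟩
  have hone_add := star_one_add_eq_star_one_mul_star hsum hcomm hdenest a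
  have hstar_star : star a * star (star a) = star 1 * star a := by
    rw [← star_add_one_eq_star_mul_star_star hsum, add_comm, hone_add]
  have hone : star 1 = 1 + star 1 := by simpa using hfix 1
  refine ⟨?_, hone_add⟩
  calc star (star a) = 1 + star 1 * star a := by rw [hfix (star a), hstar_star]
    _ = star 1 * star a := by
      rw [hfix a, ← star_one_mul_one_add_eq hone]
end

section
/- Let A be a Conway semiring satisfying 1*·1* = 1*, 1*·a = a·1* for all a, and 1*·(1*a)* = 1*·a* for all a. Then the set 1*A = {1*·a : a ∈ A} is closed under addition, multiplication, and the 'plus' operation x ↦ x·x*; moreover (1*a)·(1*a)* = 1*·(a·a*) for all a ∈ A. -/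
section LeftMultiples

variable {S : Type*}

theorem add_mem_range_mul_left [Distrib S] {c x y : S} (hx : x ∈ Set.range (c * ·))
    (hy : y ∈ Set.range (c * ·)) : x + y ∈ Set.range (c * ·) := by
  obtain ⟨a, rfl⟩ := hx
  obtain ⟨b, rfl⟩ := hy
  exact ⟨a + b, mul_add c a b⟩

theorem mul_mem_range_mul_left [Semigroup S] {c x y : S} (hx : x ∈ Set.range (c * ·))
    (hy : y ∈ Set.range (c * ·)) : x * y ∈ Set.range (c * ·) := by
  obtain ⟨a, rfl⟩ := hx
  obtain ⟨b, rfl⟩ := hy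
  exact ⟨a * c * b, by simp only [mul_assoc]⟩

theorem mul_left_mul_star_mul_left [Semigroup S] (star : S → S) {c : S}
    (hc : ∀ a, c * a = a * c) (hstar : ∀ a, c * star (c * a) = c * star a) (a : S) :
    c * a * star (c * a) = c * (a * star a) :=
  calc c * a * star (c * a)
      = a * (c * star (c * a)) := by rw [hc a, mul_assoc]
    _ = a * (c * star a) := by rw [hstar]
    _ = c * (a * star a) := by rw [← mul_assoc, ← hc a, mul_assoc]

end LeftMultiples

theorem stmt_12_general {S : Type*} [Semiring S] (star : S → S)
    (ax2 : ∀ a : S, star 1 * a = a * star 1)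
    (ax3 : ∀ a : S, star 1 * star (star 1 * a) = star 1 * star a) :
    (∀ x ∈ Set.range (fun a : S => star 1 * a), ∀ y ∈ Set.range (fun a : S => star 1 * a),
        x + y ∈ Set.range (fun a : S => star 1 * a)) ∧
    (∀ x ∈ Set.range (fun a : S => star 1 * a), ∀ y ∈ Set.range (fun a : S => star 1 * a),
        x * y ∈ Set.range (fun a : S => star 1 * a)) ∧
    (∀ x ∈ Set.range (fun a : S => star 1 * a),
        x * star x ∈ Set.range (fun a : S => star 1 * a)) ∧
    (∀ a : S, (star 1 * a) * star (star 1 * a) = star 1 * (a * star a)) := by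
  have plus_eq := mul_left_mul_star_mul_left star ax2 ax3
  refine ⟨fun _ hx _ hy => add_mem_range_mul_left hx hy,
    fun _ hx _ hy => mul_mem_range_mul_left hx hy, ?_, plus_eq⟩
  rintro x ⟨a, rfl⟩
  exact ⟨a * star a, (plus_eq a).symm⟩

/-- For a Conway semiring `A` satisfying `1*·1* = 1*`, `1*·a = a·1*` and
`1*·(1*a)* = 1*·a*`, the set `1*A = {1*·a : a ∈ A}` is closed under addition,
multiplication, and the plus operation `x ↦ x·x*`; moreover
`(1*a)·(1*a)* = 1*·(a·a*)` for all `a ∈ A`. -/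
theorem stmt_12 {S : Type*} [Semiring S] (star : S → S)
    (hsum : ∀ a b : S, star (a + b) = star a * star (b * star a))
    (hprod : ∀ a b : S, star (a * b) = 1 + a * star (b * a) * b)
    (ax1 : star 1 * star 1 = star 1)
    (ax2 : ∀ a : S, star 1 * a = a * star 1)
    (ax3 : ∀ a : S, star 1 * star (star 1 * a) = star 1 * star a) :
    (∀ x ∈ Set.range (fun a : S => star 1 * a), ∀ y ∈ Set.range (fun a : S => star 1 * a),
        x + y ∈ Set.range (fun a : S => star 1 * a)) ∧
    (∀ x ∈ Set.range (fun a : S => star 1 * a), ∀ y ∈ Set.range (fun a : S => star 1 * a),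
        x * y ∈ Set.range (fun a : S => star 1 * a)) ∧
    (∀ x ∈ Set.range (fun a : S => star 1 * a),
        x * star x ∈ Set.range (fun a : S => star 1 * a)) ∧
    (∀ a : S, (star 1 * a) * star (star 1 * a) = star 1 * (a * star a)) :=
  stmt_12_general star ax2 ax3
end

section
/- Let A be a Conway semiring satisfying 1*·1* = 1*, 1*·a = a·1*, and 1*·(1*a)* = 1*·a* for all a. Equip the set 1*A = {1*a : a ∈ A} with addition and multiplication inherited from A, zero 0, unit 1*, and star operation (1*a)^⊗ = 1*·(1*a)* (which is well-defined). Then the map h : A → 1*A, a ↦ 1*·a, preserves 0, 1, addition, multiplication, and star (i.e., h(a*) = (h a)^⊗); and 1*A is a Conway semiring satisfying 1^⊗ = 1 (where 1 denotes the unit 1* of 1*A). -/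
/-!
Everything follows from two facts about `e := 1*`: it is a central idempotent, so
`a ↦ e·a` is a multiplicative projection onto `eA`, and the hypothesis `e·(e·a)* = e·a*`
lets one strip a factor `e` from inside a star once the star is multiplied by `e`.
Each Conway identity in `eA` is then the Conway identity of `A` multiplied by `e`.
-/

section StarOneProjection

variable {S : Type*} [Semiring S] {star : S → S}

theorem star_one_mul_star_one_mul (idem : star 1 * star 1 = star 1) (t : S) :
    star 1 * (star 1 * t) = star 1 * t := by
  rw [← mul_assoc, idem]

theorem star_one_mul_left_comm (central : ∀ a : S, star 1 * a = a * star 1) (a b : S) :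
    star 1 * (a * b) = a * (star 1 * b) := by
  rw [← mul_assoc, central a, mul_assoc]

theorem star_one_mul_mul (idem : star 1 * star 1 = star 1)
    (central : ∀ a : S, star 1 * a = a * star 1) (a b : S) :
    star 1 * (a * b) = (star 1 * a) * (star 1 * b) := by
  rw [← star_one_mul_star_one_mul idem (a * b), star_one_mul_left_comm central a, ← mul_assoc]

theorem star_one_mul_star_mul_star_one_mul (central : ∀ a : S, star 1 * a = a * star 1)
    (absorb : ∀ a : S, star 1 * star (star 1 * a) = star 1 * star a) (a b : S) :
    star 1 * star (a * (star 1 * b)) = star 1 * star (a * b) := by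
  rw [← star_one_mul_left_comm central, absorb]

theorem star_one_mul_star_star_one (idem : star 1 * star 1 = star 1)
    (absorb : ∀ a : S, star 1 * star (star 1 * a) = star 1 * star a) :
    star 1 * star (star 1) = star 1 := by
  simpa only [mul_one, idem] using absorb 1

end StarOneProjection

/-- For a Conway semiring `A` satisfying `1*·1* = 1*`, `1*·a = a·1*` and
`1*·(1*a)* = 1*·a*`, equip `1*A = {1*a : a ∈ A}` with inherited addition and
multiplication, zero `0`, unit `1*`, and star `(1*a)^⊗ = 1*·(1*a)*`.  Then the
star is well defined, the map `h : a ↦ 1*·a` preserves `0`, `1`, `+`, `·` and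
star, and `1*A` is a Conway semiring satisfying `1^⊗ = 1` (its unit being
`1*`). -/
theorem stmt_13 {S : Type*} [Semiring S] (star : S → S)
    (hsum : ∀ a b : S, star (a + b) = star a * star (b * star a))
    (hprod : ∀ a b : S, star (a * b) = 1 + a * star (b * a) * b)
    (ax1 : star 1 * star 1 = star 1)
    (ax2 : ∀ a : S, star 1 * a = a * star 1)
    (ax3 : ∀ a : S, star 1 * star (star 1 * a) = star 1 * star a) :
    -- the star operation on 1*A is well defined
    (∀ a b : S, star 1 * a = star 1 * b →
        star 1 * star (star 1 * a) = star 1 * star (star 1 * b)) ∧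
    -- h preserves 0, 1, +, ·, and star
    (star 1 * (0 : S) = 0) ∧
    (star 1 * (1 : S) = star 1) ∧
    (∀ a b : S, star 1 * (a + b) = star 1 * a + star 1 * b) ∧
    (∀ a b : S, star 1 * (a * b) = (star 1 * a) * (star 1 * b)) ∧
    (∀ a : S, star 1 * star a = star 1 * star (star 1 * a)) ∧
    -- the Conway identities in 1*A (with unit 1* and star x^⊗ = 1*·x*)
    (∀ x ∈ Set.range (fun a : S => star 1 * a),
      ∀ y ∈ Set.range (fun a : S => star 1 * a),
        star 1 * star (x + y) =
          (star 1 * star x) * (star 1 * star (y * (star 1 * star x)))) ∧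
    (∀ x ∈ Set.range (fun a : S => star 1 * a),
      ∀ y ∈ Set.range (fun a : S => star 1 * a),
        star 1 * star (x * y) = star 1 + x * (star 1 * star (y * x)) * y) ∧
    -- 1^⊗ = 1 in 1*A
    (star 1 * star (star 1) = star 1) := by
  have hmul := star_one_mul_mul ax1 ax2
  refine ⟨fun a b h => by rw [h], mul_zero _, mul_one _, mul_add _, hmul,
    fun a => (ax3 a).symm, ?_, ?_, star_one_mul_star_star_one ax1 ax3⟩
  · rintro - - - ⟨b, rfl⟩
    rw [hsum, hmul, star_one_mul_star_mul_star_one_mul ax2 ax3]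
  · rintro - ⟨a, rfl⟩ - ⟨b, rfl⟩
    rw [hprod, mul_add, mul_one, hmul, hmul, star_one_mul_star_one_mul ax1,
      star_one_mul_star_one_mul ax1]
end

section
/- Every symmetric inductive *-semiring satisfies 1*·a = a·1* for all a. -/
/-! Since `1* + 1 ≤ 1*`, both `x = a·1*` and `x = 1*·a` satisfy `x + a ≤ x`. The left induction
rule applied to `1·x + a ≤ x` with `x = a·1*` gives `1*·a ≤ a·1*`, and the right induction rule
applied to `x·1 + a ≤ x` with `x = 1*·a` gives the reverse inequality. -/

section

variable {S : Type*} [Semiring S] [PartialOrder S]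

theorem mul_add_self_le_of_add_one_le
    (hmulmono : ∀ a b c d : S, a ≤ b → c ≤ d → a * c ≤ b * d) {e : S} (he : e + 1 ≤ e) (a : S) :
    a * e + a ≤ a * e :=
  calc a * e + a = a * (e + 1) := by rw [mul_add, mul_one]
    _ ≤ a * e := hmulmono a a _ _ le_rfl he

theorem add_self_mul_le_of_add_one_le
    (hmulmono : ∀ a b c d : S, a ≤ b → c ≤ d → a * c ≤ b * d) {e : S} (he : e + 1 ≤ e) (a : S) :
    e * a + a ≤ e * a :=
  calc e * a + a = (e + 1) * a := by rw [add_mul, one_mul]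
    _ ≤ e * a := hmulmono _ _ a a he le_rfl

end

theorem stmt_15_general {S : Type*} [Semiring S] [PartialOrder S] (star : S → S)
    (hmulmono : ∀ a b c d : S, a ≤ b → c ≤ d → a * c ≤ b * d)
    (hfix : ∀ a : S, a * star a + 1 ≤ star a)
    (hind : ∀ a b x : S, a * x + b ≤ x → star a * b ≤ x)
    (hsymind : ∀ a b x : S, x * a + b ≤ x → b * star a ≤ x) :
    ∀ a : S, star 1 * a = a * star 1 := by
  intro a
  have hstar : star 1 + 1 ≤ star 1 := by simpa only [one_mul] using hfix 1
  have hle : star 1 * a ≤ a * star 1 :=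
    hind 1 a _ (by simpa only [one_mul] using mul_add_self_le_of_add_one_le hmulmono hstar a)
  have hge : a * star 1 ≤ star 1 * a :=
    hsymind 1 a _ (by simpa only [mul_one] using add_self_mul_le_of_add_one_le hmulmono hstar a)
  exact le_antisymm hle hge

/-- Every symmetric inductive `*`-semiring satisfies `1*·a = a·1*`. -/
theorem stmt_15 {S : Type*} [Semiring S] [PartialOrder S] (star : S → S)
    (haddmono : ∀ a b c d : S, a ≤ b → c ≤ d → a + c ≤ b + d)
    (hmulmono : ∀ a b c d : S, a ≤ b → c ≤ d → a * c ≤ b * d)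
    (hfix : ∀ a : S, a * star a + 1 ≤ star a)
    (hind : ∀ a b x : S, a * x + b ≤ x → star a * b ≤ x)
    (hsymind : ∀ a b x : S, x * a + b ≤ x → b * star a ≤ x) :
    ∀ a : S, star 1 * a = a * star 1 :=
  stmt_15_general star hmulmono hfix hind hsymind
end

section
/- Let s₀, r be formal power series in ℕ∞⟨⟨Σ*⟩⟩ with s₀ proper (coefficient of the empty word is 0), and consider the equation x = (1 + s₀)·x + r. Let s₀⁺ = s₀·s₀*, and let 1* denote the constant series with value ∞ at the empty word and 0 elsewhere. Then a series z solves z = (1+s₀)·z + r if and only if z = (1+s₀)*·r + 1*·s₀⁺·t + t for some series t; that is, the set of solutions of x = (1+s₀)x + r is exactly { (1+s₀)*r + 1*s₀⁺ t + t : t ∈ ℕ∞⟨⟨Σ*⟩⟩ }. -/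
/-- Cauchy (convolution) product of power series over `Σ*` with coefficients
in `ℕ∞`, viewed as functions `List σ → ℕ∞`. -/
def seriesConv {σ : Type*} (s r : List σ → ℕ∞) : List σ → ℕ∞ :=
  fun w => ∑ i ∈ Finset.range (w.length + 1), s (w.take i) * r (w.drop i)

/-- The power series `1`. -/
def seriesOne {σ : Type*} : List σ → ℕ∞ :=
  fun w => match w with | [] => 1 | _ => 0

/-- Powers of a series under the Cauchy product. -/
def seriesPow {σ : Type*} (s : List σ → ℕ∞) : ℕ → (List σ → ℕ∞)
  | 0 => seriesOne
  | n + 1 => seriesConv s (seriesPow s n)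

/-- The star `s* = ∑_{n ≥ 0} sⁿ` of a series, computed pointwise as a
supremum of partial sums in the complete semiring `ℕ∞`. -/
noncomputable def seriesStar {σ : Type*} (s : List σ → ℕ∞) : List σ → ℕ∞ :=
  fun w => ⨆ N : ℕ, ∑ n ∈ Finset.range N, seriesPow s n w

/-- The series `1*`: coefficient `∞` at the empty word and `0` elsewhere. -/
def oneStar {σ : Type*} : List σ → ℕ∞ :=
  fun w => match w with | [] => ⊤ | _ => 0
section Aux
variable {σ : Type*}

lemma aux_conv_eq_zero (p q : List σ → ℕ∞) (w : List σ) :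
    seriesConv p q w = 0 ↔ ∀ i ≤ w.length, p (w.take i) = 0 ∨ q (w.drop i) = 0 := by
  unfold seriesConv
  rw [Finset.sum_eq_zero_iff]
  constructor
  · intro h i hi
    exact mul_eq_zero.mp (h i (Finset.mem_range.mpr (Nat.lt_succ_of_le hi)))
  · intro h i hi
    rcases h i (Nat.lt_succ_iff.mp (Finset.mem_range.mp hi)) with h' | h' <;> simp [h']

lemma aux_conv_ne_zero {p q : List σ → ℕ∞} {w : List σ} (h : seriesConv p q w ≠ 0) :
    ∃ i ≤ w.length, p (w.take i) ≠ 0 ∧ q (w.drop i) ≠ 0 := by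
  by_contra hc
  push_neg at hc
  exact h ((aux_conv_eq_zero p q w).mpr (fun i hi => by
    by_cases hp : p (w.take i) = 0
    · exact Or.inl hp
    · exact Or.inr (hc i hi hp)))

lemma aux_le_conv (p q : List σ → ℕ∞) {w : List σ} {i : ℕ} (hi : i ≤ w.length) :
    p (w.take i) * q (w.drop i) ≤ seriesConv p q w := by
  unfold seriesConv
  exact Finset.single_le_sum (f := fun i => p (w.take i) * q (w.drop i))
    (fun _ _ => zero_le) (Finset.mem_range.mpr (Nat.lt_succ_of_le hi))

lemma aux_term_ne (p q : List σ → ℕ∞) {w : List σ} {i : ℕ} (hi : i ≤ w.length)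
    (hp : p (w.take i) ≠ 0) (hq : q (w.drop i) ≠ 0) : seriesConv p q w ≠ 0 := by
  intro h
  rcases (aux_conv_eq_zero p q w).mp h i hi with h' | h' <;> contradiction

lemma aux_one_ne_nil {l : List σ} (h : seriesOne l ≠ 0) : l = [] := by
  cases l with
  | nil => rfl
  | cons a t => exact absurd rfl h

lemma aux_oneStar_ne_nil {l : List σ} (h : oneStar l ≠ 0) : l = [] := by
  cases l with
  | nil => rfl
  | cons a t => exact absurd rfl h

lemma aux_conv_nil (p q : List σ → ℕ∞) : seriesConv p q [] = p [] * q [] := by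
  simp [seriesConv]

lemma aux_conv_one (p : List σ → ℕ∞) (w : List σ) : seriesConv seriesOne p w = p w := by
  unfold seriesConv
  rw [Finset.sum_eq_single 0]
  · simp [seriesOne]
  · intro i hi hne
    have hne' : w.take i ≠ [] := by
      intro hnil
      rcases List.take_eq_nil_iff.mp hnil with h0 | h0
      · exact hne h0
      · subst h0
        simp at hi
        exact hne hi
    obtain ⟨a, t, ht⟩ := List.exists_cons_of_ne_nil hne'
    rw [ht]
    simp [seriesOne]
  · intro h
    simp at h

lemma aux_conv_split (p z : List σ → ℕ∞) (w : List σ) :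
    seriesConv (seriesOne + p) z w = z w + seriesConv p z w := by
  have h : ∀ i ∈ Finset.range (w.length + 1),
      (seriesOne + p : List σ → ℕ∞) (w.take i) * z (w.drop i)
        = seriesOne (w.take i) * z (w.drop i) + p (w.take i) * z (w.drop i) := by
    intro i _
    simp [Pi.add_apply, add_mul]
  unfold seriesConv
  rw [Finset.sum_congr rfl h, Finset.sum_add_distrib]
  congr 1
  exact aux_conv_one z w

lemma aux_iSup_eq_zero (f : ℕ → ℕ∞) : (⨆ n, f n) = 0 ↔ ∀ n, f n = 0 :=
  ⟨fun h n => le_antisymm (h ▸ le_iSup f n) bot_le, fun h => by simp [h]⟩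

lemma aux_star_eq_zero (s : List σ → ℕ∞) (w : List σ) :
    seriesStar s w = 0 ↔ ∀ n, seriesPow s n w = 0 := by
  unfold seriesStar
  rw [aux_iSup_eq_zero]
  constructor
  · intro h n
    have h' := h (n + 1)
    rw [Finset.sum_eq_zero_iff] at h'
    exact h' n (Finset.mem_range.mpr (Nat.lt_succ_self n))
  · intro h N
    exact Finset.sum_eq_zero (fun n _ => h n)

lemma aux_star_ne_exists {s : List σ → ℕ∞} {w : List σ} (h : seriesStar s w ≠ 0) :
    ∃ n, seriesPow s n w ≠ 0 := by
  by_contra hc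
  push_neg at hc
  exact h ((aux_star_eq_zero s w).mpr hc)

lemma aux_star_ne_of_pow {s : List σ → ℕ∞} {w : List σ} {n : ℕ}
    (h : seriesPow s n w ≠ 0) : seriesStar s w ≠ 0 :=
  fun hst => h ((aux_star_eq_zero s w).mp hst n)

lemma aux_star_nil_ne (s : List σ → ℕ∞) : seriesStar s [] ≠ 0 :=
  aux_star_ne_of_pow (n := 0) (by simp [seriesPow, seriesOne])

lemma aux_pow_concat (s : List σ → ℕ∞) {a b : List σ} {n : ℕ}
    (ha : s a ≠ 0) (hb : seriesPow s n b ≠ 0) : seriesPow s (n + 1) (a ++ b) ≠ 0 := by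
  show seriesConv s (seriesPow s n) (a ++ b) ≠ 0
  apply aux_term_ne s (seriesPow s n) (i := a.length) (by simp)
  · rw [List.take_left]; exact ha
  · rw [List.drop_left]; exact hb

lemma aux_splus_concat {s : List σ → ℕ∞} {u m : List σ}
    (hu : s u ≠ 0) (hm : seriesConv s (seriesStar s) m ≠ 0) :
    seriesConv s (seriesStar s) (u ++ m) ≠ 0 := by
  obtain ⟨a, ha, hsa, hstar⟩ := aux_conv_ne_zero hm
  obtain ⟨n, hpn⟩ := aux_star_ne_exists hstar
  have hconc := aux_pow_concat s hsa hpn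
  rw [List.take_append_drop] at hconc
  apply aux_term_ne s (seriesStar s) (i := u.length) (by simp)
  · rw [List.take_left]; exact hu
  · rw [List.drop_left]; exact aux_star_ne_of_pow hconc

lemma aux_top_of_eventually (f : ℕ → ℕ∞) (n₀ : ℕ) (hf : ∀ n ≥ n₀, f n ≠ 0) :
    (⨆ N : ℕ, ∑ n ∈ Finset.range N, f n) = ⊤ := by
  apply le_antisymm le_top
  calc (⊤ : ℕ∞) = ⨆ N : ℕ, (N : ℕ∞) := ENat.iSup_natCast.symm
    _ ≤ ⨆ N : ℕ, ∑ n ∈ Finset.range (n₀ + N), f n := by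
        apply iSup_mono
        intro N
        calc (N : ℕ∞) = ∑ n ∈ Finset.Ico n₀ (n₀ + N), 1 := by
              rw [Finset.sum_const, Nat.card_Ico]; simp
          _ ≤ ∑ n ∈ Finset.Ico n₀ (n₀ + N), f n :=
              Finset.sum_le_sum (fun n hn =>
                ENat.one_le_iff_ne_zero.mpr (hf n (Finset.mem_Ico.mp hn).1))
          _ ≤ ∑ n ∈ Finset.range (n₀ + N), f n :=
              Finset.sum_le_sum_of_subset
                (fun x hx => Finset.mem_range.mpr (Finset.mem_Ico.mp hx).2)
    _ ≤ ⨆ N : ℕ, ∑ n ∈ Finset.range N, f n :=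
        iSup_le (fun N => le_iSup_of_le (n₀ + N) le_rfl)

lemma aux_pow_oneadd_succ (s₀ : List σ → ℕ∞) (n : ℕ) (w : List σ) :
    seriesPow (seriesOne + s₀) (n + 1) w
      = seriesPow (seriesOne + s₀) n w + seriesConv s₀ (seriesPow (seriesOne + s₀) n) w :=
  aux_conv_split s₀ (seriesPow (seriesOne + s₀) n) w

lemma aux_star_oneadd_nil (s₀ : List σ → ℕ∞) (hs : s₀ [] = 0) :
    seriesStar (seriesOne + s₀) [] = ⊤ := by
  have hp : ∀ n, seriesPow (seriesOne + s₀) n [] = 1 := by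
    intro n
    induction n with
    | zero => rfl
    | succ n ih =>
      show seriesConv (seriesOne + s₀) (seriesPow (seriesOne + s₀) n) [] = 1
      rw [aux_conv_nil, ih]
      show (seriesOne [] + s₀ []) * 1 = 1
      rw [hs]
      rfl
  unfold seriesStar
  exact aux_top_of_eventually _ 0 (fun n _ => by rw [hp n]; exact one_ne_zero)

lemma aux_star_oneadd_top (s₀ : List σ → ℕ∞) {u u' : List σ}
    (hu : s₀ u ≠ 0) (hu' : seriesStar (seriesOne + s₀) u' ≠ 0) :
    seriesStar (seriesOne + s₀) (u ++ u') = ⊤ := by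
  obtain ⟨n₀, hn₀⟩ := aux_star_ne_exists hu'
  have hmono : ∀ n, n₀ ≤ n → seriesPow (seriesOne + s₀) n u' ≠ 0 := by
    intro n hn
    induction n, hn using Nat.le_induction with
    | base => exact hn₀
    | succ n hn ih =>
      rw [aux_pow_oneadd_succ]
      intro h
      exact ih (add_eq_zero.mp h).1
  unfold seriesStar
  apply aux_top_of_eventually _ (n₀ + 1)
  intro n hn
  obtain ⟨k, rfl⟩ : ∃ k, n = k + 1 := ⟨n - 1, by omega⟩
  rw [aux_pow_oneadd_succ]
  intro h
  have h2 := (add_eq_zero.mp h).2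
  have hk : n₀ ≤ k := by omega
  exact aux_term_ne s₀ (seriesPow (seriesOne + s₀) k) (i := u.length) (by simp)
    (by rw [List.take_left]; exact hu)
    (by rw [List.drop_left]; exact hmono k hk) h2

lemma aux_pow_oneadd_to_pow (s₀ : List σ → ℕ∞) :
    ∀ (n : ℕ) (u : List σ), seriesPow (seriesOne + s₀) n u ≠ 0 →
      ∃ k, seriesPow s₀ k u ≠ 0 := by
  intro n
  induction n with
  | zero => exact fun u h => ⟨0, h⟩
  | succ n ih =>
    intro u h
    rw [aux_pow_oneadd_succ] at h
    by_cases h1 : seriesPow (seriesOne + s₀) n u = 0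
    · have h2 : seriesConv s₀ (seriesPow (seriesOne + s₀) n) u ≠ 0 := by
        simpa [h1] using h
      obtain ⟨j, hj, hsj, hpj⟩ := aux_conv_ne_zero h2
      obtain ⟨k, hk⟩ := ih (u.drop j) hpj
      have := aux_pow_concat s₀ hsj hk
      rw [List.take_append_drop] at this
      exact ⟨k + 1, this⟩
    · exact ih u h1

end Aux
lemma aux_claimC {σ : Type*} (s₀ r z : List σ → ℕ∞) (hs : s₀ [] = 0)
    (hz : ∀ w, z w ≠ ⊤ → seriesConv s₀ z w = 0 ∧ r w = 0) :
    ∀ (N : ℕ) (w : List σ), w.length ≤ N → z w ≠ ⊤ →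
      (∀ n, seriesConv (seriesPow s₀ (n + 1)) z w = 0) ∧
      (∀ n, seriesConv (seriesPow s₀ n) r w = 0) := by
  intro N
  induction N with
  | zero =>
    intro w hw hzt
    have hw0 : w = [] := List.length_eq_zero_iff.mp (Nat.le_zero.mp hw)
    subst hw0
    obtain ⟨hcs, hr⟩ := hz [] hzt
    constructor
    · intro n
      have hp : seriesPow s₀ (n + 1) [] = 0 := by
        show seriesConv s₀ (seriesPow s₀ n) [] = 0
        rw [aux_conv_nil, hs, zero_mul]
      rw [aux_conv_nil, hp, zero_mul]
    · intro n
      rw [aux_conv_nil, hr, mul_zero]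
  | succ N ih =>
    intro w hw hzt
    obtain ⟨hcs, hr⟩ := hz w hzt
    have hterm := (aux_conv_eq_zero s₀ z w).mp hcs
    have key : ∀ i ≤ w.length, ∀ m, seriesPow s₀ (m + 1) (w.take i) ≠ 0 →
        ∃ j, 1 ≤ j ∧ j ≤ i ∧ z (w.drop j) = 0 ∧ (w.drop j).length ≤ N ∧
          seriesPow s₀ m ((w.drop j).take (i - j)) ≠ 0 := by
      intro i hi m hpow
      obtain ⟨j, hj, hsj, hpj⟩ := aux_conv_ne_zero hpow
      have hjle : j ≤ i := by
        rw [List.length_take] at hj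
        omega
      rw [List.take_take, min_eq_left hjle] at hsj
      have hj1 : 1 ≤ j := by
        rcases Nat.eq_zero_or_pos j with h0 | h
        · subst h0; simp [hs] at hsj
        · exact h
      have hwne : w ≠ [] := by
        intro h
        subst h
        simp [hs] at hsj
      have hzj : z (w.drop j) = 0 := by
        rcases hterm j (le_trans hjle hi) with h | h
        · exact absurd h hsj
        · exact h
      have hlen : (w.drop j).length ≤ N := by
        rw [List.length_drop]
        have h1 : 1 ≤ w.length := by
          cases w
          · exact absurd rfl hwne
          · simp
        omega
      refine ⟨j, hj1, hjle, hzj, hlen, ?_⟩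
      rw [List.drop_take] at hpj
      exact hpj
    constructor
    · intro n
      rw [aux_conv_eq_zero]
      intro i hi
      by_contra hc
      push_neg at hc
      obtain ⟨hp, hzi⟩ := hc
      obtain ⟨j, hj1, hji, hzj, hlen, hpj⟩ := key i hi n hp
      have hdrop : (w.drop j).drop (i - j) = w.drop i := by
        rw [List.drop_drop]
        congr 1
        omega
      cases n with
      | zero =>
        have hnil : (w.drop j).take (i - j) = [] := aux_one_ne_nil hpj
        rcases List.take_eq_nil_iff.mp hnil with h0 | h0
        · have hij : i = j := by omega
          rw [hij] at hzi
          exact hzi hzj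
        · have h1 : w.drop i = [] := by rw [← hdrop, h0, List.drop_nil]
          rw [h1] at hzi
          rw [h0] at hzj
          exact hzi hzj
      | succ m =>
        have hih := (ih (w.drop j) hlen (by rw [hzj]; simp)).1 m
        rw [aux_conv_eq_zero] at hih
        have hij : i - j ≤ (w.drop j).length := by
          rw [List.length_drop]
          omega
        rcases hih (i - j) hij with h | h
        · exact hpj h
        · rw [hdrop] at h
          exact hzi h
    · intro n
      rw [aux_conv_eq_zero]
      intro i hi
      by_contra hc
      push_neg at hc
      obtain ⟨hp, hri⟩ := hc
      cases n with
      | zero =>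
        have hnil : w.take i = [] := aux_one_ne_nil hp
        have hdw : w.drop i = w := by
          rcases List.take_eq_nil_iff.mp hnil with h0 | h0
          · subst h0; rfl
          · subst h0; simp
        rw [hdw] at hri
        exact hri hr
      | succ m =>
        obtain ⟨j, hj1, hji, hzj, hlen, hpj⟩ := key i hi m hp
        have hih := (ih (w.drop j) hlen (by rw [hzj]; simp)).2 m
        rw [aux_conv_eq_zero] at hih
        have hij : i - j ≤ (w.drop j).length := by
          rw [List.length_drop]
          omega
        rcases hih (i - j) hij with h | h
        · exact hpj h
        · have hdrop : (w.drop j).drop (i - j) = w.drop i := by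
            rw [List.drop_drop]
            congr 1
            omega
          rw [hdrop] at h
          exact hri h


/-- For `s₀, r` in `ℕ∞⟨⟨Σ*⟩⟩` with `s₀` proper, the solutions of
`x = (1 + s₀)·x + r` are exactly the series `(1+s₀)*·r + 1*·s₀⁺·t + t`
for arbitrary series `t`, where `s₀⁺ = s₀·s₀*`. -/
theorem stmt_17 {σ : Type*} (s₀ r : List σ → ℕ∞) (hs : s₀ [] = 0) :
    ∀ z : List σ → ℕ∞,
      (z = fun w => seriesConv (seriesOne + s₀) z w + r w) ↔
      ∃ t : List σ → ℕ∞,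
        z = fun w =>
          seriesConv (seriesStar (seriesOne + s₀)) r w +
          seriesConv oneStar (seriesConv (seriesConv s₀ (seriesStar s₀)) t) w +
          t w := by
  intro z
  constructor
  · -- forward direction
    intro hsol
    have hz0 : ∀ w, z w ≠ ⊤ → seriesConv s₀ z w = 0 ∧ r w = 0 := by
      intro w ht
      have h : z w = z w + (seriesConv s₀ z w + r w) := by
        have h' : z w = seriesConv (seriesOne + s₀) z w + r w := congrFun hsol w
        rw [aux_conv_split, add_assoc] at h'
        exact h'
      have h0 : (0 : ℕ∞) = seriesConv s₀ z w + r w :=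
        WithTop.add_left_cancel ht (by exact (add_zero (z w)).trans h)
      exact add_eq_zero.mp h0.symm
    refine ⟨z, ?_⟩
    funext w
    by_cases ht : z w = ⊤
    · rw [ht]
      simp
    · obtain ⟨h1, h2⟩ := aux_claimC s₀ r z hs hz0 w.length w le_rfl ht
      have hA : seriesConv (seriesStar (seriesOne + s₀)) r w = 0 := by
        rw [aux_conv_eq_zero]
        intro i hi
        by_contra hc
        push_neg at hc
        obtain ⟨hst, hri⟩ := hc
        obtain ⟨n, hn⟩ := aux_star_ne_exists hst
        obtain ⟨k, hk⟩ := aux_pow_oneadd_to_pow s₀ n _ hn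
        have hc2 := h2 k
        rw [aux_conv_eq_zero] at hc2
        rcases hc2 i hi with h | h
        · exact hk h
        · exact hri h
      have hB : seriesConv oneStar (seriesConv (seriesConv s₀ (seriesStar s₀)) z) w = 0 := by
        rw [aux_conv_eq_zero]
        intro i hi
        by_contra hc
        push_neg at hc
        obtain ⟨h1s, hX⟩ := hc
        have hnil := aux_oneStar_ne_nil h1s
        have hdw : w.drop i = w := by
          rcases List.take_eq_nil_iff.mp hnil with h0 | h0
          · subst h0; rfl
          · subst h0; simp
        rw [hdw] at hX
        obtain ⟨j, hj, hplus, hzj⟩ := aux_conv_ne_zero hX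
        obtain ⟨a, _, hsa, hstar⟩ := aux_conv_ne_zero hplus
        obtain ⟨n, hpn⟩ := aux_star_ne_exists hstar
        have hconc := aux_pow_concat s₀ hsa hpn
        rw [List.take_append_drop] at hconc
        have hc1 := h1 n
        rw [aux_conv_eq_zero] at hc1
        rcases hc1 j hj with h | h
        · exact hconc h
        · exact hzj h
      rw [hA, hB]
      simp
  · -- backward direction
    rintro ⟨t, hzdef⟩
    have hzw : ∀ w, z w =
        seriesConv (seriesStar (seriesOne + s₀)) r w +
        seriesConv oneStar (seriesConv (seriesConv s₀ (seriesStar s₀)) t) w + t w := by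
      intro w
      rw [hzdef]
    funext w
    rw [aux_conv_split]
    by_cases hZ : z w = ⊤
    · rw [hZ]
      simp
    · -- it suffices to show both extra summands vanish
      have hAle : seriesConv (seriesStar (seriesOne + s₀)) r w ≤ z w := by
        rw [hzw w]
        exact le_trans (self_le_add_right _ _) (self_le_add_right _ _)
      have hBle : seriesConv oneStar (seriesConv (seriesConv s₀ (seriesStar s₀)) t) w ≤ z w := by
        rw [hzw w]
        exact le_trans (self_le_add_right _ _)
          (add_le_add_left (le_add_self) _)
      have hr0 : r w = 0 := by
        by_contra hrne
        apply hZ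
        have hAtop : (⊤ : ℕ∞) ≤ seriesConv (seriesStar (seriesOne + s₀)) r w := by
          have hle := aux_le_conv (seriesStar (seriesOne + s₀)) r (w := w) (i := 0) (Nat.zero_le _)
          rw [List.take_zero, List.drop_zero, aux_star_oneadd_nil s₀ hs, ENat.top_mul hrne] at hle
          exact hle
        exact le_antisymm le_top (le_trans hAtop hAle)
      have hBtop : ∀ v : List σ,
          seriesConv (seriesConv s₀ (seriesStar s₀)) t v ≠ 0 →
          (⊤ : ℕ∞) ≤ seriesConv oneStar (seriesConv (seriesConv s₀ (seriesStar s₀)) t) v := by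
        intro v hXv
        have hle := aux_le_conv oneStar (seriesConv (seriesConv s₀ (seriesStar s₀)) t)
          (w := v) (i := 0) (Nat.zero_le _)
        rw [List.take_zero, List.drop_zero] at hle
        have h1 : oneStar ([] : List σ) = ⊤ := rfl
        rw [h1, ENat.top_mul hXv] at hle
        exact hle
      have hcs0 : seriesConv s₀ z w = 0 := by
        by_contra hne
        apply hZ
        obtain ⟨i, hi, hsu, hzv⟩ := aux_conv_ne_zero hne
        have hzv' : seriesConv (seriesStar (seriesOne + s₀)) r (w.drop i) ≠ 0 ∨
            seriesConv oneStar (seriesConv (seriesConv s₀ (seriesStar s₀)) t) (w.drop i) ≠ 0 ∨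
            t (w.drop i) ≠ 0 := by
          by_contra hall
          push_neg at hall
          apply hzv
          rw [hzw (w.drop i), hall.1, hall.2.1, hall.2.2]
          simp
        rcases hzv' with hAv | hBv | htv
        · -- case A
          obtain ⟨j, hj, hstar, hrv⟩ := aux_conv_ne_zero hAv
          have hijle : i + j ≤ w.length := by
            rw [List.length_drop] at hj
            omega
          have htake : w.take (i + j) = w.take i ++ (w.drop i).take j := List.take_add
          have hdropq : w.drop (i + j) = (w.drop i).drop j := List.drop_drop.symm
          have hstop : seriesStar (seriesOne + s₀) (w.take (i + j)) = ⊤ := by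
            rw [htake]
            exact aux_star_oneadd_top s₀ hsu hstar
          have hle := aux_le_conv (seriesStar (seriesOne + s₀)) r (w := w) (i := i + j) hijle
          rw [hstop, hdropq, ENat.top_mul hrv] at hle
          exact le_antisymm le_top (le_trans hle hAle)
        · -- case B
          obtain ⟨j, hj, h1s, hXv⟩ := aux_conv_ne_zero hBv
          have hnil := aux_oneStar_ne_nil h1s
          have hdw : (w.drop i).drop j = w.drop i := by
            rcases List.take_eq_nil_iff.mp hnil with h0 | h0
            · subst h0; rfl
            · rw [h0]; simp
          rw [hdw] at hXv
          obtain ⟨j', hj', hplus, htv⟩ := aux_conv_ne_zero hXv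
          have hijle : i + j' ≤ w.length := by
            rw [List.length_drop] at hj'
            omega
          have htake : w.take (i + j') = w.take i ++ (w.drop i).take j' := List.take_add
          have hdropq : w.drop (i + j') = (w.drop i).drop j' := List.drop_drop.symm
          have hplus2 : seriesConv s₀ (seriesStar s₀) (w.take (i + j')) ≠ 0 := by
            rw [htake]
            exact aux_splus_concat hsu hplus
          have hXw : seriesConv (seriesConv s₀ (seriesStar s₀)) t w ≠ 0 :=
            aux_term_ne _ _ hijle hplus2 (by rw [hdropq]; exact htv)
          exact le_antisymm le_top (le_trans (hBtop w hXw) hBle)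
        · -- case t
          have hplus : seriesConv s₀ (seriesStar s₀) (w.take i) ≠ 0 := by
            apply aux_term_ne s₀ (seriesStar s₀) (w := w.take i) (i := (w.take i).length) le_rfl
            · rw [List.take_length]; exact hsu
            · rw [List.drop_length]; exact aux_star_nil_ne s₀
          have hXw : seriesConv (seriesConv s₀ (seriesStar s₀)) t w ≠ 0 :=
            aux_term_ne _ _ hi hplus htv
          exact le_antisymm le_top (le_trans (hBtop w hXw) hBle)
      rw [hcs0, hr0, add_zero, add_zero]
end
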